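/- arXiv:2403.10296 — 4 statements merged into one kernel-verified Lean document; each statement's English description precedes it below -/
import Mathlib

section
/- In the linear-channel variant of the migration system (each exported channel message may be imported at most once), along any trace and for each key identifier k, the nonces of the encryption events logged under k are pairwise distinct; i.e., migration over a non-replayable secure channel preserves the no-key–nonce-reuse property. -/
/-- A configuration of the migration system: a finite multiset of live guest
contexts `(k, c)` (key identifier naming one VMPCK, message counter) and a
multiset of in-flight channel messages `(k, c)` (exported guest contexts). -/
structure MigConf (K : Type) : Type where
  live : Multiset (K × ℕ)
  chan : Multiset (K × ℕ)

/-- An encryption event: the key identifier under which the message is encrypted,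
the nonce (message counter) used, and the payload. -/
abbrev MigEvent (K M : Type) : Type := K × ℕ × M

/-- `ReachMigLin K M k0 cfg evs`: in the linear-channel variant of the migration
system (each exported channel message may be imported at most once: import
consumes the channel message), the configuration `cfg` is reachable from the
initial configuration (a single live context `(k0, 0)`, empty channel), logging
the encryption events `evs` in order.  `serve` logs `(k, c + 1, m)` with a fresh
payload `m` and advances the counter by two; `export` moves a live context onto
the channel; `import` consumes a channel message `(k, c)`, logs `(k, c + 1, m)`
with a fresh payload `m`, and creates the live context `(k, c + 2)`. -/
inductive ReachMigLin (K M : Type) (k0 : K) : MigConf K → List (MigEvent K M) → Prop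
  | init : ReachMigLin K M k0 ⟨{(k0, 0)}, 0⟩ []
  | serve {rest chan : Multiset (K × ℕ)} {evs : List (MigEvent K M)}
      (k : K) (c : ℕ) (m : M) :
      ReachMigLin K M k0 ⟨(k, c) ::ₘ rest, chan⟩ evs →
      m ∉ evs.map (fun e => e.2.2) →
      ReachMigLin K M k0 ⟨(k, c + 2) ::ₘ rest, chan⟩ (evs ++ [(k, c + 1, m)])
  | exp {rest chan : Multiset (K × ℕ)} {evs : List (MigEvent K M)}
      (k : K) (c : ℕ) :
      ReachMigLin K M k0 ⟨(k, c) ::ₘ rest, chan⟩ evs →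
      ReachMigLin K M k0 ⟨rest, (k, c) ::ₘ chan⟩ evs
  | imp {live rest : Multiset (K × ℕ)} {evs : List (MigEvent K M)}
      (k : K) (c : ℕ) (m : M) :
      ReachMigLin K M k0 ⟨live, (k, c) ::ₘ rest⟩ evs →
      m ∉ evs.map (fun e => e.2.2) →
      ReachMigLin K M k0 ⟨(k, c + 2) ::ₘ live, rest⟩ (evs ++ [(k, c + 1, m)])

lemma migLin_inv (K M : Type) (k0 : K)
    (cfg : MigConf K) (evs : List (MigEvent K M))
    (h : ReachMigLin K M k0 cfg evs) :
    ∃ c : ℕ, cfg.live + cfg.chan = {(k0, c)} ∧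
      (evs.map (fun e => e.2.1)).Pairwise (· < ·) ∧
      ∀ n ∈ evs.map (fun e => e.2.1), n ≤ c := by
  induction h with
  | init => exact ⟨0, by simp, by simp, by simp⟩
  | serve k c m h hm ih =>
    obtain ⟨c0, hmult, hpw, hle⟩ := ih
    rw [Multiset.cons_add] at hmult
    have hcard := congrArg Multiset.card hmult
    simp at hcard
    obtain ⟨hr, hc2⟩ := hcard
    subst hr; subst hc2
    simp only [add_zero, Multiset.cons_zero, Multiset.singleton_inj, Prod.mk.injEq] at hmult
    obtain ⟨hk, hc⟩ := hmult
    subst hk; subst hc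
    refine ⟨c + 2, ?_, ?_, ?_⟩
    · simp
    · simp only [List.map_append, List.pairwise_append]
      refine ⟨hpw, by simp, ?_⟩
      intro a ha b hb
      simp at hb
      subst hb
      have := hle a ha
      omega
    · intro n hn
      simp only [List.map_append, List.mem_append] at hn
      rcases hn with hn | hn
      · have := hle n hn; omega
      · simp at hn; omega
  | exp k c h ih =>
    obtain ⟨c0, hmult, hpw, hle⟩ := ih
    refine ⟨c0, ?_, hpw, hle⟩
    simp only at hmult ⊢
    rw [Multiset.add_cons, ← Multiset.cons_add, hmult]
  | imp k c m h hm ih =>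
    obtain ⟨c0, hmult, hpw, hle⟩ := ih
    simp only at hmult
    rw [Multiset.add_cons] at hmult
    have hcard := congrArg Multiset.card hmult
    simp at hcard
    obtain ⟨hr, hc2⟩ := hcard
    subst hr; subst hc2
    simp only [zero_add, add_zero, Multiset.cons_zero, Multiset.singleton_inj, Prod.mk.injEq] at hmult
    obtain ⟨hk, hc⟩ := hmult
    subst hk; subst hc
    refine ⟨c + 2, ?_, ?_, ?_⟩
    · simp
    · simp only [List.map_append, List.pairwise_append]
      refine ⟨hpw, by simp, ?_⟩
      intro a ha b hb
      simp at hb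
      subst hb
      have := hle a ha
      omega
    · intro n hn
      simp only [List.map_append, List.mem_append] at hn
      rcases hn with hn | hn
      · have := hle n hn; omega
      · simp at hn; omega

/-- In the linear-channel variant of the migration system, along any trace and
for each key identifier `k`, the nonces of the encryption events logged under
`k` are pairwise distinct; i.e., migration over a non-replayable secure channel
preserves the no-key–nonce-reuse property. -/
theorem linear_channel_no_key_nonce_reuse (K M : Type) [DecidableEq K] (k0 : K)
    (cfg : MigConf K) (evs : List (MigEvent K M))
    (h : ReachMigLin K M k0 cfg evs) :
    ∀ k : K, (((evs.filter (fun e => e.1 = k)).map (fun e => e.2.1))).Nodup := by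
  intro k
  obtain ⟨c, -, hpw, -⟩ := migLin_inv K M k0 cfg evs h
  have hnd : (evs.map (fun e => e.2.1)).Nodup := hpw.imp (fun h => Nat.ne_of_lt h)
  exact hnd.sublist (List.Sublist.map _ List.filter_sublist)
end

section
/- In the replayable-channel variant of the migration system (a channel message persists and may be imported any number of times), there exists a trace containing two encryption events with the same key identifier and the same nonce but distinct payloads; i.e., replay of migration messages over the inter-agent channel causes key–nonce reuse, which under the paper's adversary model compromises the VMPCK. (This is the attack trace of the paper's lemma ExeAttackReplayOverCommChan for the model variant -DENABLE_REPLAY_OVER_COMM.) -/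
/-- `ReachMigRep K M k0 cfg evs`: in the replayable-channel variant of the
migration system (a channel message persists and may be imported any number of
times), the configuration `cfg` is reachable from the initial configuration
(a single live context `(k0, 0)`, empty channel), logging the encryption events
`evs` in order. -/
inductive ReachMigRep (K M : Type) (k0 : K) : MigConf K → List (MigEvent K M) → Prop
  | init : ReachMigRep K M k0 ⟨{(k0, 0)}, 0⟩ []
  | serve {rest chan : Multiset (K × ℕ)} {evs : List (MigEvent K M)}
      (k : K) (c : ℕ) (m : M) :
      ReachMigRep K M k0 ⟨(k, c) ::ₘ rest, chan⟩ evs →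
      m ∉ evs.map (fun e => e.2.2) →
      ReachMigRep K M k0 ⟨(k, c + 2) ::ₘ rest, chan⟩ (evs ++ [(k, c + 1, m)])
  | exp {rest chan : Multiset (K × ℕ)} {evs : List (MigEvent K M)}
      (k : K) (c : ℕ) :
      ReachMigRep K M k0 ⟨(k, c) ::ₘ rest, chan⟩ evs →
      ReachMigRep K M k0 ⟨rest, (k, c) ::ₘ chan⟩ evs
  | imp {live chan : Multiset (K × ℕ)} {evs : List (MigEvent K M)}
      (k : K) (c : ℕ) (m : M) :
      ReachMigRep K M k0 ⟨live, chan⟩ evs →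
      (k, c) ∈ chan →
      m ∉ evs.map (fun e => e.2.2) →
      ReachMigRep K M k0 ⟨(k, c + 2) ::ₘ live, chan⟩ (evs ++ [(k, c + 1, m)])

/-- ExeAttackReplayOverCommChan (model variant -DENABLE_REPLAY_OVER_COMM): in the
replayable-channel variant of the migration system, there exists a trace
containing two encryption events with the same key identifier and the same nonce
but distinct payloads; i.e., replay of migration messages over the inter-agent
channel causes key–nonce reuse. -/
theorem ExeAttackReplayOverCommChan :
    ∃ (cfg : MigConf ℕ) (evs : List (MigEvent ℕ ℕ)) (k n m m' : ℕ),
      ReachMigRep ℕ ℕ 0 cfg evs ∧ m ≠ m' ∧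
      List.Sublist [(k, n, m), (k, n, m')] evs := by
  refine ⟨⟨{(0, 2), (0, 2)}, {(0, 0)}⟩, [(0, 1, 0), (0, 1, 1)], 0, 1, 0, 1,
    ?_, by norm_num, List.Sublist.refl _⟩
  have h0 : ReachMigRep ℕ ℕ 0 ⟨{(0, 0)}, 0⟩ [] := ReachMigRep.init
  have h1 : ReachMigRep ℕ ℕ 0 ⟨(0 : Multiset (ℕ × ℕ)), {(0, 0)}⟩ [] :=
    ReachMigRep.exp 0 0 h0
  have h2 : ReachMigRep ℕ ℕ 0 ⟨{(0, 2)}, {(0, 0)}⟩ [(0, 1, 0)] :=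
    ReachMigRep.imp 0 0 0 h1 (Multiset.mem_singleton.mpr rfl) (by simp)
  have h3 := ReachMigRep.imp 0 0 1 h2 (Multiset.mem_singleton.mpr rfl) (by simp)
  simpa using h3
end

section
/- In every reachable state (p, b) of the TCB-countermeasure system, if the migration-enabled bit b equals 0, then tcb q ≥ L for every platform q visited so far in the trace; consequently, a third party who verifies an attestation report whose migration-enabled field is 0 can correctly conclude that the guest has never resided on a platform whose TCB version is below its launch TCB. (This establishes the correctness of the paper's proposed countermeasure of adding a migration-enabled field to the guest context and the ATTESTATION_REPORT structure.) -/
/-- `ReachTCB P tcb p₀ (p, b) visited`: in the TCB-countermeasure system, the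
guest launched on platform `p₀` (whose launch TCB is `L := tcb p₀`) can reach
the state `(p, b)` — current platform `p` and migration-enabled bit `b` — with
`visited` being the list of platforms visited so far in the trace (in order).
The initial state is `(p₀, 0)` with only `p₀` visited; the only transition is a
migration to an arbitrary platform `q`, which sets the bit to `1` if
`tcb q < tcb p₀` and leaves it unchanged otherwise. -/
inductive ReachTCB (P : Type) (tcb : P → ℕ) (p₀ : P) : P × ℕ → List P → Prop
  | init : ReachTCB P tcb p₀ (p₀, 0) [p₀]
  | migrate {p : P} {b : ℕ} {visited : List P} (q : P) :
      ReachTCB P tcb p₀ (p, b) visited →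
      ReachTCB P tcb p₀ (q, if tcb q < tcb p₀ then 1 else b) (visited ++ [q])

lemma reachTCB_aux (P : Type) (tcb : P → ℕ) (p₀ : P)
    (s : P × ℕ) (visited : List P)
    (h : ReachTCB P tcb p₀ s visited) (hb : s.2 = 0) :
    ∀ q ∈ visited, tcb p₀ ≤ tcb q := by
  induction h with
  | init => simp
  | @migrate p' b' vis q _ ih =>
    simp only at hb
    split at hb
    · omega
    · intro r hr
      rcases List.mem_append.1 hr with h1 | h1
      · exact ih hb r h1
      · simp at h1; subst h1; omega

/-- Correctness of the paper's proposed countermeasure (a migration-enabled field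
in the guest context and the ATTESTATION_REPORT structure): in every reachable
state `(p, b)` of the TCB-countermeasure system, if the migration-enabled bit
`b` equals `0`, then `tcb q ≥ L` (where `L = tcb p₀` is the launch TCB) for
every platform `q` visited so far in the trace.  Hence a third party who
verifies an attestation report whose migration-enabled field is `0` can
correctly conclude that the guest has never resided on a platform whose TCB
version is below its launch TCB. -/
theorem migration_enabled_bit_correct (P : Type) (tcb : P → ℕ) (p₀ : P)
    (p : P) (b : ℕ) (visited : List P)
    (h : ReachTCB P tcb p₀ (p, b) visited) (hb : b = 0) :
    ∀ q ∈ visited, tcb p₀ ≤ tcb q := by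
  exact reachTCB_aux P tcb p₀ (p, b) visited h hb
end

section
/- In the back-and-forth migration system without the countermeasure, if there exist platforms p, q ∈ P with tcb p ≥ L and tcb q < L, then there exists a trace starting on platform p that contains, in order, the events Report(p, tcb p), Run(q), Report(p, tcb p); i.e., every attestation report a third party ever sees is generated on a platform with acceptable TCB version even though the guest executed a computation step on a platform with TCB version below L in between. Hence a malicious cloud provider can, by migrating a guest back and forth, create the illusion that the guest is consistently managed by secure, up-to-date firmware. -/
/-- Logged events of the back-and-forth migration system: `run p` (a computation
step of the guest on its current platform `p`) and `report p v` (an attestation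
report generated on the guest's current platform `p`, disclosing only the TCB
version `v = tcb p` of that platform). -/
inductive BFEvent (P : Type) : Type
  | run (p : P)
  | report (p : P) (v : ℕ)

/-- `ReachBF P tcb p₀ p evs`: in the back-and-forth migration system (without the
proposed migration-enabled bit), the guest, starting on platform `p₀`, can
currently reside on platform `p` having logged the events `evs` in order.
Transitions: `migrate` moves the guest to an arbitrary platform (logging
nothing), `run` logs `run p` on the current platform `p`, and `report` logs
`report p (tcb p)` on the current platform `p`. -/
inductive ReachBF (P : Type) (tcb : P → ℕ) (p₀ : P) : P → List (BFEvent P) → Prop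
  | init : ReachBF P tcb p₀ p₀ []
  | migrate {p : P} {evs : List (BFEvent P)} (q : P) :
      ReachBF P tcb p₀ p evs →
      ReachBF P tcb p₀ q evs
  | run {p : P} {evs : List (BFEvent P)} :
      ReachBF P tcb p₀ p evs →
      ReachBF P tcb p₀ p (evs ++ [BFEvent.run p])
  | report {p : P} {evs : List (BFEvent P)} :
      ReachBF P tcb p₀ p evs →
      ReachBF P tcb p₀ p (evs ++ [BFEvent.report p (tcb p)])

/-- The back-and-forth migration attack: without the countermeasure, if there are
platforms `p, q` with `tcb p ≥ L` and `tcb q < L` (where `L` is the TCB version a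
third-party verifier deems acceptable), then there is a trace starting on
platform `p` that contains, in order, the events `Report(p, tcb p)`, `Run(q)`,
`Report(p, tcb p)`, and in which every logged attestation report discloses a TCB
version `≥ L`; i.e., every attestation report a third party ever sees is
generated on a platform with acceptable TCB version even though the guest
executed a computation step on a platform with TCB version below `L` in between.
Hence a malicious cloud provider can, by migrating a guest back and forth,
create the illusion that the guest is consistently managed by secure,
up-to-date firmware. -/
theorem back_and_forth_migration_attack (P : Type) (tcb : P → ℕ) (L : ℕ)
    (p q : P) (hp : L ≤ tcb p) (hq : tcb q < L) :
    ∃ (pf : P) (evs : List (BFEvent P)),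
      ReachBF P tcb p pf evs ∧
      List.Sublist [BFEvent.report p (tcb p), BFEvent.run q,
        BFEvent.report p (tcb p)] evs ∧
      (∀ e ∈ evs, ∀ (q' : P) (v : ℕ), e = BFEvent.report q' v → L ≤ v) := by
  refine ⟨p, [BFEvent.report p (tcb p), BFEvent.run q, BFEvent.report p (tcb p)],
    ?_, List.Sublist.refl _, ?_⟩
  · have h1 : ReachBF P tcb p p [BFEvent.report p (tcb p)] := ReachBF.init.report
    have h2 := (h1.migrate q).run
    have h3 := (h2.migrate p).report
    simpa using h3
  · rintro e he q' v rfl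
    simp only [List.mem_cons, List.not_mem_nil, or_false] at he
    rcases he with h | h | h <;> first
      | (injection h with h1 h2; omega)
      | exact absurd h (by simp)
end
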